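/- Let E and C be N×N real matrices, let M be the 2N×2N block matrix M = [[0, I],[E, 0]] (zero matrix and identity in the top row, E and zero in the bottom row), and for τ ∈ [0,T] write exp(Mτ) in N×N blocks as [[O₁₁(τ), O₁₂(τ)],[O₂₁(τ), O₂₂(τ)]]. Assume O₁₁(τ) + O₁₂(τ)C is invertible for every τ ∈ [0,T]. Then Ψ(τ) := (O₂₁(τ) + O₂₂(τ)C)(O₁₁(τ) + O₁₂(τ)C)^{−1} satisfies the matrix Riccati equation Ψ'(τ) = −Ψ(τ)Ψ(τ) + E for all τ ∈ [0,T], with initial value Ψ(0) = C. -/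

import Mathlib

/-!
Radon's lemma. The columns `[X; Y] = exp(τM) [I; C]` solve the linear system `X' = Y`,
`Y' = E X`, so wherever `X` is invertible the quotient `Ψ = Y X⁻¹` has derivative
`Y' X⁻¹ - Y X⁻¹ X' X⁻¹ = E - Ψ²`, and `Ψ(0) = C` because `exp 0 = 1`.
-/

open Matrix

section RingInverse

variable {𝕜 R : Type*} [NontriviallyNormedField 𝕜] [NormedRing R] [HasSummableGeomSeries R]
  [NormedAlgebra 𝕜 R] {X Y : 𝕜 → R} {X' E : R} {s : Set 𝕜} {t : 𝕜}

theorem HasDerivWithinAt.ringInverse (hX : HasDerivWithinAt X X' s t) (hu : IsUnit (X t)) :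
    HasDerivWithinAt (fun τ => Ring.inverse (X τ))
      (-(Ring.inverse (X t) * X' * Ring.inverse (X t))) s t := by
  obtain ⟨u, hu⟩ := hu
  rw [← hu, Ring.inverse_unit]
  exact (hasFDerivAt_ringInverse u).comp_hasDerivWithinAt_of_eq t hX hu

theorem HasDerivWithinAt.riccati_of_linear (hX : HasDerivWithinAt X (Y t) s t)
    (hY : HasDerivWithinAt Y (E * X t) s t) (hu : IsUnit (X t)) :
    HasDerivWithinAt (fun τ => Y τ * Ring.inverse (X τ))
      (-(Y t * Ring.inverse (X t) * (Y t * Ring.inverse (X t))) + E) s t := by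
  refine (hY.mul (hX.ringInverse hu)).congr_deriv ?_
  rw [mul_assoc E, Ring.mul_inverse_cancel _ hu, mul_one]
  noncomm_ring

end RingInverse

def Matrix.submatrixLinearMap {R l m n o : Type*} [Semiring R] (r : l → m) (c : o → n) :
    Matrix m n R →ₗ[R] Matrix l o R where
  toFun A := A.submatrix r c
  map_add' _ _ := rfl
  map_smul' _ _ := rfl

section MatrixCalculus

open scoped Matrix.Norms.Operator

variable {𝕂 l m n o : Type*} [NontriviallyNormedField 𝕂] [CompleteSpace 𝕂]
  [Fintype l] [Fintype m] [Fintype n] [Fintype o] {s : Set 𝕂} {t : 𝕂}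

theorem HasDerivWithinAt.matrix_apply {F : 𝕂 → Matrix m n 𝕂} {F' : Matrix m n 𝕂}
    (h : HasDerivWithinAt F F' s t) (i : m) (j : n) :
    HasDerivWithinAt (fun τ => F τ i j) (F' i j) s t :=
  (entryLinearMap 𝕂 𝕂 i j).toContinuousLinearMap.hasFDerivAt.comp_hasDerivWithinAt t h

theorem HasDerivAt.submatrix {F : 𝕂 → Matrix m n 𝕂} {F' : Matrix m n 𝕂}
    (h : HasDerivAt F F' t) (r : l → m) (c : o → n) :
    HasDerivAt (fun τ => (F τ).submatrix r c) (F'.submatrix r c) t :=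
  (submatrixLinearMap (R := 𝕂) r c).toContinuousLinearMap.hasFDerivAt.comp_hasDerivAt t h

end MatrixCalculus

section LinearizedFlow

open scoped Matrix.Norms.Operator

variable {n : Type*} [Fintype n] [DecidableEq n] (E C : Matrix n n ℝ)

/-- The square factor `fromBlocks 1 0 C 0` stands for the column `[I; C]`, so the left block
column of `linearizedFlow E C τ` is `[X(τ); Y(τ)] = exp(τM) [I; C]`. -/
noncomputable def linearizedFlow (τ : ℝ) : Matrix (n ⊕ n) (n ⊕ n) ℝ :=
  NormedSpace.exp (τ • fromBlocks 0 1 E 0) * fromBlocks 1 0 C 0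

noncomputable def riccatiFlow (τ : ℝ) : Matrix n n ℝ :=
  (linearizedFlow E C τ).toBlocks₂₁ * (linearizedFlow E C τ).toBlocks₁₁⁻¹

theorem hasDerivAt_linearizedFlow (t : ℝ) :
    HasDerivAt (linearizedFlow E C) (fromBlocks 0 1 E 0 * linearizedFlow E C t) t := by
  rw [linearizedFlow, ← mul_assoc]
  exact (hasDerivAt_exp_smul_const' (fromBlocks 0 1 E 0) t).mul_const _

theorem hasDerivAt_linearizedFlow_toBlocks₁₁ (t : ℝ) :
    HasDerivAt (fun τ => (linearizedFlow E C τ).toBlocks₁₁)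
      (linearizedFlow E C t).toBlocks₂₁ t := by
  refine ((hasDerivAt_linearizedFlow E C t).submatrix Sum.inl Sum.inl).congr_deriv ?_
  change (fromBlocks 0 1 E 0 * linearizedFlow E C t).toBlocks₁₁ = _
  conv_lhs => rw [← fromBlocks_toBlocks (linearizedFlow E C t)]
  simp [fromBlocks_multiply]

theorem hasDerivAt_linearizedFlow_toBlocks₂₁ (t : ℝ) :
    HasDerivAt (fun τ => (linearizedFlow E C τ).toBlocks₂₁)
      (E * (linearizedFlow E C t).toBlocks₁₁) t := by
  refine ((hasDerivAt_linearizedFlow E C t).submatrix Sum.inr Sum.inl).congr_deriv ?_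
  change (fromBlocks 0 1 E 0 * linearizedFlow E C t).toBlocks₂₁ = _
  conv_lhs => rw [← fromBlocks_toBlocks (linearizedFlow E C t)]
  simp [fromBlocks_multiply]

theorem hasDerivWithinAt_riccatiFlow_apply {s : Set ℝ} {t : ℝ}
    (hu : IsUnit (linearizedFlow E C t).toBlocks₁₁) (i j : n) :
    HasDerivWithinAt (fun τ => riccatiFlow E C τ i j)
      ((-(riccatiFlow E C t * riccatiFlow E C t) + E) i j) s t := by
  simp only [riccatiFlow, nonsing_inv_eq_ringInverse]
  exact (HasDerivWithinAt.riccati_of_linear (Y := fun τ => (linearizedFlow E C τ).toBlocks₂₁)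
    (hasDerivAt_linearizedFlow_toBlocks₁₁ E C t).hasDerivWithinAt
    (hasDerivAt_linearizedFlow_toBlocks₂₁ E C t).hasDerivWithinAt hu).matrix_apply i j

theorem riccatiFlow_zero : riccatiFlow E C 0 = C := by
  simp [riccatiFlow, linearizedFlow]

end LinearizedFlow

theorem matrix_riccati_flow_solution
    (N : ℕ) (T : ℝ)
    (E C : Matrix (Fin N) (Fin N) ℝ)
    (M : Matrix (Fin N ⊕ Fin N) (Fin N ⊕ Fin N) ℝ)
    (hM : M = Matrix.fromBlocks 0 1 E 0)
    (O₁₁ O₁₂ O₂₁ O₂₂ : ℝ → Matrix (Fin N) (Fin N) ℝ)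
    (hO : ∀ τ : ℝ, NormedSpace.exp (τ • M) =
      Matrix.fromBlocks (O₁₁ τ) (O₁₂ τ) (O₂₁ τ) (O₂₂ τ))
    (hinv : ∀ τ ∈ Set.Icc (0:ℝ) T, IsUnit (O₁₁ τ + O₁₂ τ * C)) :
    (∀ τ ∈ Set.Icc (0:ℝ) T, ∀ i j : Fin N,
      HasDerivWithinAt
        (fun s : ℝ => (((O₂₁ s + O₂₂ s * C) * (O₁₁ s + O₁₂ s * C)⁻¹ : Matrix (Fin N) (Fin N) ℝ)) i j)
        ((-(((O₂₁ τ + O₂₂ τ * C) * (O₁₁ τ + O₁₂ τ * C)⁻¹) *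
            ((O₂₁ τ + O₂₂ τ * C) * (O₁₁ τ + O₁₂ τ * C)⁻¹)) + E) i j)
        (Set.Icc (0:ℝ) T) τ) ∧
    (O₂₁ 0 + O₂₂ 0 * C) * (O₁₁ 0 + O₁₂ 0 * C)⁻¹ = C := by
  subst hM
  have hX : ∀ τ, O₁₁ τ + O₁₂ τ * C = (linearizedFlow E C τ).toBlocks₁₁ := fun τ => by
    simp [linearizedFlow, hO, fromBlocks_multiply]
  have hY : ∀ τ, O₂₁ τ + O₂₂ τ * C = (linearizedFlow E C τ).toBlocks₂₁ := fun τ => by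
    simp [linearizedFlow, hO, fromBlocks_multiply]
  have hΨ : ∀ τ, (O₂₁ τ + O₂₂ τ * C) * (O₁₁ τ + O₁₂ τ * C)⁻¹ = riccatiFlow E C τ := fun τ => by
    rw [hX, hY, riccatiFlow]
  simp only [hΨ]
  exact ⟨fun τ hτ i j => hasDerivWithinAt_riccatiFlow_apply E C (hX τ ▸ hinv τ hτ) i j,
    riccatiFlow_zero E C⟩
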